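/- For any real y ≥ 1 and any integer n ≥ 2: F(n) ≤ y·n if and only if d_{i+1}(n) ≤ y · d_i(n) for every pair of consecutive divisors d_i(n) < d_{i+1}(n) of n. -/

import Mathlib

def Fdiv (n : ℕ) : ℕ :=
  if n = 1 then 1 else (n.divisors.filter (fun d => 1 < d)).sup (fun d => d * d.minFac)

/-- The hard direction: if `d * minFac d ≤ y * n` for all divisors `d > 1`, then
every divisor `a < n` has a divisor of `n` in `(a, y*a]`. Proved by strong induction,
splitting off the largest prime factor. -/
lemma hard_dir (y : ℝ) (hy : 1 ≤ y) :
    ∀ n : ℕ, (∀ d : ℕ, d ∣ n → 1 < d → (d * d.minFac : ℝ) ≤ y * n) →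
      ∀ a : ℕ, a ∣ n → a < n → ∃ b : ℕ, b ∣ n ∧ a < b ∧ (b : ℝ) ≤ y * a := by
  intro n
  induction n using Nat.strong_induction_on with
  | _ n IH =>
    intro hF a ha hal
    have hn0 : n ≠ 0 := by rintro rfl; omega
    have ha1 : 1 ≤ a := Nat.pos_of_dvd_of_pos ha (Nat.pos_of_ne_zero hn0)
    have hn2 : 2 ≤ n := by omega
    -- largest prime factor
    have hne : n.primeFactors.Nonempty := Nat.nonempty_primeFactors.mpr (by omega)
    set p := n.primeFactors.max' hne with hpdef
    have hpmem : p ∈ n.primeFactors := n.primeFactors.max'_mem hne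
    have hp : p.Prime := Nat.prime_of_mem_primeFactors hpmem
    have hpn : p ∣ n := Nat.dvd_of_mem_primeFactors hpmem
    have hp2 : 2 ≤ p := hp.two_le
    set k := n.factorization p with hkdef
    set m := n / p ^ k with hmdef
    have hnm : p ^ k * m = n := Nat.ordProj_mul_ordCompl_eq_self n p
    have hpm : ¬ p ∣ m := Nat.not_dvd_ordCompl hp hn0
    have hmdvd : m ∣ n := Nat.ordCompl_dvd n p
    have hm0 : m ≠ 0 := by intro h; rw [h, Nat.mul_zero] at hnm; omega
    have hm1 : 1 ≤ m := Nat.pos_of_ne_zero hm0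
    have hk1 : 1 ≤ k := by
      rcases Nat.eq_zero_or_pos k with hk | hk
      · exfalso; rw [hk] at hnm; simp at hnm; exact hpm (hnm ▸ hpn)
      · exact hk
    have hpk0 : 0 < p ^ k := Nat.pow_pos (by omega)
    have hpk2 : 2 ≤ p ^ k := le_trans hp2 (Nat.le_self_pow (by omega) p)
    have hmn : m < n := by
      have : 2 * m ≤ p ^ k * m := Nat.mul_le_mul_right m hpk2
      omega
    -- primes dividing m are < p
    have hqm : ∀ q : ℕ, q.Prime → q ∣ m → q < p := by
      intro q hq hqd
      have hqmem : q ∈ n.primeFactors := by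
        rw [Nat.mem_primeFactors]
        exact ⟨hq, hqd.trans hmdvd, hn0⟩
      have hle : q ≤ p := n.primeFactors.le_max' q hqmem
      have hne' : q ≠ p := by rintro rfl; exact hpm hqd
      omega
    -- F-condition descends to m
    have hFm : ∀ d : ℕ, d ∣ m → 1 < d → (d * d.minFac : ℝ) ≤ y * m := by
      intro d hd hd1
      have hdp : d * p ^ k ∣ n := by
        rw [← hnm, mul_comm (p ^ k) m]
        exact mul_dvd_mul hd dvd_rfl
      have hdp1 : 1 < d * p ^ k := by
        have := Nat.mul_le_mul (le_refl d) hpk2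
        omega
      have hq := Nat.minFac_prime (Nat.ne_of_gt hd1)
      have hqlt : d.minFac < p := hqm d.minFac hq ((Nat.minFac_dvd d).trans hd)
      have hmf : (d * p ^ k).minFac = d.minFac := by
        have h1 : (d * p ^ k).minFac ≤ d.minFac :=
          Nat.minFac_le_of_dvd hq.two_le ((Nat.minFac_dvd d).mul_right _)
        have hr : (d * p ^ k).minFac.Prime := Nat.minFac_prime (by omega)
        have hrd : (d * p ^ k).minFac ∣ d * p ^ k := Nat.minFac_dvd _
        rcases hr.dvd_mul.mp hrd with h | h
        · exact le_antisymm h1 (Nat.minFac_le_of_dvd hr.two_le h)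
        · exfalso
          have : (d * p ^ k).minFac = p := (Nat.prime_dvd_prime_iff_eq hr hp).mp
            (hr.dvd_of_dvd_pow h)
          omega
      have hF' := hF (d * p ^ k) hdp hdp1
      rw [hmf, ← hnm] at hF'
      push_cast at hF'
      have hpkR : (0 : ℝ) < ((p : ℝ)) ^ k := by
        have : (0:ℝ) < (p:ℝ) := by exact_mod_cast (by omega : 0 < p)
        positivity
      have h2 : ((d : ℝ) * (d.minFac : ℝ)) * ((p : ℝ) ^ k) ≤ (y * m) * ((p : ℝ) ^ k) := by
        nlinarith [hF']
      have := le_of_mul_le_mul_right h2 hpkR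
      push_cast
      linarith
    -- p ≤ y * m
    have hpym : (p : ℝ) ≤ y * m := by
      have hpkd : p ^ k ∣ n := Nat.ordProj_dvd n p
      have hF' := hF (p ^ k) hpkd (by omega)
      rw [hp.pow_minFac (by omega), ← hnm] at hF'
      push_cast at hF'
      have hpkR : (0 : ℝ) < ((p : ℝ)) ^ k := by
        have : (0:ℝ) < (p:ℝ) := by exact_mod_cast (by omega : 0 < p)
        positivity
      have h2 : (p : ℝ) * ((p : ℝ) ^ k) ≤ (y * m) * ((p : ℝ) ^ k) := by nlinarith [hF']
      exact le_of_mul_le_mul_right h2 hpkR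
    have hGm := IH m hmn hFm
    -- decompose a
    set j := a.factorization p with hjdef
    set a' := a / p ^ j with ha'def
    have haa : p ^ j * a' = a := Nat.ordProj_mul_ordCompl_eq_self a p
    have ha'dvd_a : a' ∣ a := Nat.ordCompl_dvd a p
    have hpa' : ¬ p ∣ a' := Nat.not_dvd_ordCompl hp (by omega)
    have ha'0 : a' ≠ 0 := by intro h; rw [h, Nat.mul_zero] at haa; omega
    have hjk : j ≤ k := by
      have := (Nat.factorization_le_iff_dvd (by omega) hn0).mpr ha
      exact this p
    have hpj0 : 0 < p ^ j := Nat.pow_pos (by omega)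
    have ha'm : a' ∣ m := by
      have h1 : a' ∣ n := ha'dvd_a.trans ha
      have hcop : a'.Coprime (p ^ k) :=
        Nat.Coprime.pow_right k (Nat.coprime_comm.mp ((hp.coprime_iff_not_dvd).mpr hpa'))
      rw [← hnm] at h1
      exact hcop.dvd_of_dvd_mul_left h1
    by_cases hcase : a' < m
    · -- use induction on m directly
      obtain ⟨b', hb'm, hab', hble⟩ := hGm a' ha'm hcase
      refine ⟨p ^ j * b', ?_, ?_, ?_⟩
      · rw [← hnm]; exact mul_dvd_mul (pow_dvd_pow p hjk) hb'm
      · rw [← haa]; exact mul_lt_mul_of_pos_left hab' hpj0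
      · rw [← haa]
        have hpjR : (0 : ℝ) ≤ ((p ^ j : ℕ) : ℝ) := by positivity
        calc ((p ^ j * b' : ℕ) : ℝ) = ((p ^ j : ℕ) : ℝ) * (b' : ℝ) := by push_cast; ring
          _ ≤ ((p ^ j : ℕ) : ℝ) * (y * a') := mul_le_mul_of_nonneg_left hble hpjR
          _ = y * ((p ^ j * a' : ℕ) : ℝ) := by push_cast; ring
    · -- a' = m
      have ha'm' : a' = m := le_antisymm (Nat.le_of_dvd hm1 ha'm) (by omega)
      have hjlt : j < k := by
        rcases Nat.lt_or_ge j k with h | h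
        · exact h
        · exfalso
          have : j = k := by omega
          rw [← haa, ha'm', this] at hal
          omega
      -- find minimal divisor c of m with m < c * p
      set S := m.divisors.filter (fun c => m < c * p) with hSdef
      have hmS : m ∈ S := by
        simp only [hSdef, Finset.mem_filter, Nat.mem_divisors]
        refine ⟨⟨dvd_rfl, hm0⟩, ?_⟩
        have : m * 2 ≤ m * p := Nat.mul_le_mul_left m hp2
        omega
      have hSne : S.Nonempty := ⟨m, hmS⟩
      set c := S.min' hSne with hcdef
      have hcS : c ∈ S := S.min'_mem hSne
      have hcm : c ∣ m := (Nat.mem_divisors.mp (Finset.mem_filter.mp hcS).1).1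
      have hcp : m < c * p := (Finset.mem_filter.mp hcS).2
      have hc1 : 1 ≤ c := Nat.pos_of_dvd_of_pos hcm hm1
      -- key: p * c ≤ y * m
      have hkey : ((p * c : ℕ) : ℝ) ≤ y * m := by
        by_cases hc1' : c = 1
        · rw [hc1']; push_cast; linarith [hpym]
        · have hc2 : 2 ≤ c := by omega
          -- c₀ : largest divisor of m below c
          set T := m.divisors.filter (fun x => x < c) with hTdef
          have h1T : 1 ∈ T := by
            simp only [hTdef, Finset.mem_filter, Nat.mem_divisors]
            exact ⟨⟨one_dvd m, hm0⟩, by omega⟩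
          have hTne : T.Nonempty := ⟨1, h1T⟩
          set c₀ := T.max' hTne with hc₀def
          have hc₀T : c₀ ∈ T := T.max'_mem hTne
          have hc₀m : c₀ ∣ m := (Nat.mem_divisors.mp (Finset.mem_filter.mp hc₀T).1).1
          have hc₀c : c₀ < c := (Finset.mem_filter.mp hc₀T).2
          have hc₀1 : 1 ≤ c₀ := Nat.pos_of_dvd_of_pos hc₀m hm1
          have hc₀lt : c₀ < m := lt_of_lt_of_le hc₀c (Nat.le_of_dvd hm1 hcm)
          -- c₀ ∉ S hence c₀ * p ≤ m
          have hc₀p : c₀ * p ≤ m := by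
            by_contra hcon
            have : c₀ ∈ S := by
              simp only [hSdef, Finset.mem_filter, Nat.mem_divisors]
              exact ⟨⟨hc₀m, hm0⟩, by omega⟩
            have := S.min'_le c₀ this
            omega
          obtain ⟨b₀, hb₀m, hc₀b₀, hb₀le⟩ := hGm c₀ hc₀m hc₀lt
          have hcb₀ : c ≤ b₀ := by
            by_contra hcon
            push_neg at hcon
            have : b₀ ∈ T := by
              simp only [hTdef, Finset.mem_filter, Nat.mem_divisors]
              exact ⟨⟨hb₀m, hm0⟩, hcon⟩
            have := T.le_max' b₀ this
            omega
          have hcy : (c : ℝ) ≤ y * c₀ := le_trans (by exact_mod_cast hcb₀) hb₀le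
          have hy0 : (0 : ℝ) ≤ y := by linarith
          calc ((p * c : ℕ) : ℝ) = (p : ℝ) * (c : ℝ) := by push_cast; ring
            _ ≤ (p : ℝ) * (y * c₀) := by
                apply mul_le_mul_of_nonneg_left hcy (by positivity)
            _ = y * ((c₀ * p : ℕ) : ℝ) := by push_cast; ring
            _ ≤ y * (m : ℝ) := by
                apply mul_le_mul_of_nonneg_left _ hy0
                exact_mod_cast hc₀p
      refine ⟨p ^ (j + 1) * c, ?_, ?_, ?_⟩
      · rw [← hnm]; exact mul_dvd_mul (pow_dvd_pow p hjlt) hcm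
      · rw [← haa, ha'm']
        calc p ^ j * m < p ^ j * (c * p) := mul_lt_mul_of_pos_left hcp hpj0
          _ = p ^ (j + 1) * c := by ring
      · rw [← haa, ha'm']
        have hpjR : (0 : ℝ) ≤ ((p ^ j : ℕ) : ℝ) := by positivity
        calc ((p ^ (j + 1) * c : ℕ) : ℝ) = ((p ^ j : ℕ) : ℝ) * ((p * c : ℕ) : ℝ) := by
              push_cast; ring
          _ ≤ ((p ^ j : ℕ) : ℝ) * (y * m) := mul_le_mul_of_nonneg_left hkey hpjR
          _ = y * ((p ^ j * m : ℕ) : ℝ) := by push_cast; ring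

/-- The easy direction. -/
lemma easy_dir (y : ℝ) (hy : 1 ≤ y) (n : ℕ) (hn : 2 ≤ n)
    (hG : ∀ a : ℕ, a ∣ n → a < n → ∃ b : ℕ, b ∣ n ∧ a < b ∧ (b : ℝ) ≤ y * a) :
    ∀ d : ℕ, d ∣ n → 1 < d → (d * d.minFac : ℝ) ≤ y * n := by
  intro d hd hd1
  set e := n / d with hedef
  have hde : d * e = n := Nat.mul_div_cancel' hd
  have he1 : 1 ≤ e := by
    rcases Nat.eq_zero_or_pos e with h | h
    · exfalso; rw [h] at hde; omega
    · exact h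
  have hen : e < n := by
    have : 2 * e ≤ d * e := Nat.mul_le_mul_right e hd1
    omega
  obtain ⟨b, hbn, heb, hble⟩ := hG e (Dvd.intro_left d hde) hen
  have hb1 : 1 ≤ b := by omega
  -- minFac d ≤ b
  have hqb : d.minFac ≤ b := by
    by_contra hcon
    push_neg at hcon
    -- b coprime to d
    have hcop : b.Coprime d := by
      rw [Nat.coprime_comm]
      by_contra hg
      have hg1 : 1 < Nat.gcd d b := by
        rcases Nat.eq_zero_or_pos (Nat.gcd d b) with h | h
        · simp [Nat.gcd_eq_zero_iff] at h; omega
        · rcases Nat.lt_or_ge 1 (Nat.gcd d b) with h' | h'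
          · exact h'
          · exfalso; exact hg (by omega)
      set r := (Nat.gcd d b).minFac with hrdef
      have hr : r.Prime := Nat.minFac_prime (by omega)
      have hrd : r ∣ d := (Nat.minFac_dvd _).trans (Nat.gcd_dvd_left d b)
      have hrb : r ∣ b := (Nat.minFac_dvd _).trans (Nat.gcd_dvd_right d b)
      have h1 : d.minFac ≤ r := Nat.minFac_le_of_dvd hr.two_le hrd
      have h2 : r ≤ b := Nat.le_of_dvd (by omega) hrb
      omega
    have hbe : b ∣ e := by
      rw [← hde] at hbn
      exact hcop.dvd_of_dvd_mul_left hbn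
    have := Nat.le_of_dvd (by omega) hbe
    omega
  have hqy : (d.minFac : ℝ) ≤ y * e := le_trans (by exact_mod_cast hqb) hble
  have hdR : (0 : ℝ) ≤ (d : ℝ) := by positivity
  calc ((d : ℕ) : ℝ) * (d.minFac : ℝ) ≤ (d : ℝ) * (y * e) :=
        mul_le_mul_of_nonneg_left hqy hdR
    _ = y * ((d * e : ℕ) : ℝ) := by push_cast; ring
    _ = y * n := by rw [hde]

/-- `Fdiv n ≤ y * n` iff the pointwise condition. -/
lemma fdiv_le_iff (y : ℝ) (n : ℕ) (hn : 2 ≤ n) :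
    ((Fdiv n : ℝ) ≤ y * n) ↔ ∀ d : ℕ, d ∣ n → 1 < d → (d * d.minFac : ℝ) ≤ y * n := by
  have hne : (n.divisors.filter (fun d => 1 < d)).Nonempty := by
    refine ⟨n, ?_⟩
    simp only [Finset.mem_filter, Nat.mem_divisors]
    exact ⟨⟨dvd_rfl, by omega⟩, by omega⟩
  have hFdef : Fdiv n = (n.divisors.filter (fun d => 1 < d)).sup (fun d => d * d.minFac) := by
    rw [Fdiv]; simp only [if_neg (by omega : n ≠ 1)]
  constructor
  · intro h d hd hd1
    have hmem : d ∈ n.divisors.filter (fun d => 1 < d) := by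
      simp only [Finset.mem_filter, Nat.mem_divisors]
      exact ⟨⟨hd, by omega⟩, hd1⟩
    have hle : d * d.minFac ≤ Fdiv n := by
      rw [hFdef]
      exact Finset.le_sup (f := fun d : ℕ => d * d.minFac) hmem
    have h1 : ((d * d.minFac : ℕ) : ℝ) ≤ (Fdiv n : ℝ) := by exact_mod_cast hle
    push_cast at h1
    linarith
  · intro h
    obtain ⟨d₀, hd₀mem, hd₀eq⟩ :=
      Finset.exists_mem_eq_sup (α := ℕ) (n.divisors.filter (fun d => 1 < d)) hne
        (fun d => d * d.minFac)
    rw [hFdef, hd₀eq]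
    simp only [Finset.mem_filter, Nat.mem_divisors] at hd₀mem
    exact_mod_cast h d₀ hd₀mem.1.1 hd₀mem.2

theorem dense_divisors_iff (y : ℝ) (hy : 1 ≤ y) (n : ℕ) (hn : 2 ≤ n) :
    ((Fdiv n : ℝ) ≤ y * n) ↔
      ∀ i : ℕ, ∀ h : i + 1 < (n.divisors.sort (· ≤ ·)).length,
        ((n.divisors.sort (· ≤ ·))[i + 1] : ℝ) ≤
          y * ((n.divisors.sort (· ≤ ·))[i]'(by omega) : ℝ) := by
  set L := n.divisors.sort (· ≤ ·) with hLdef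
  have hsorted : List.Pairwise (· < ·) L := (Finset.sortedLT_sort _).pairwise
  have hmemL : ∀ x : ℕ, x ∈ L ↔ x ∈ n.divisors := fun x => Finset.mem_sort _
  have hn0 : n ≠ 0 := by omega
  rw [fdiv_le_iff y n hn]
  constructor
  · -- F condition → gaps, via hard_dir
    intro hF i hi
    have hGd := hard_dir y hy n hF
    have hiL : i < L.length := Nat.lt_of_succ_lt hi
    have ha : L[i] ∈ n.divisors := (hmemL _).mp (List.getElem_mem hiL)
    have hb : L[i + 1] ∈ n.divisors := (hmemL _).mp (List.getElem_mem hi)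
    have hab : L[i] < L[i + 1] := by
      have := hsorted.rel_get_of_lt (a := ⟨i, hiL⟩) (b := ⟨i + 1, hi⟩) (by simp)
      simpa using this
    have han : L[i] < n := by
      have hbn : L[i + 1] ≤ n := Nat.le_of_dvd (by omega) (Nat.mem_divisors.mp hb).1
      omega
    obtain ⟨b, hbn', hab', hble⟩ := hGd L[i] (Nat.mem_divisors.mp ha).1 han
    -- L[i+1] ≤ b since L[i+1] is the immediate successor
    have hbL : b ∈ L := (hmemL b).mpr (Nat.mem_divisors.mpr ⟨hbn', hn0⟩)
    obtain ⟨jb, hjb, hjbeq⟩ := List.mem_iff_getElem.mp hbL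
    have hij : i < jb := by
      by_contra hcon
      push_neg at hcon
      rcases Nat.lt_or_ge jb i with h | h
      · have := hsorted.rel_get_of_lt (a := ⟨jb, hjb⟩) (b := ⟨i, hiL⟩) (by simpa)
        simp only [List.get_eq_getElem] at this
        omega
      · have : jb = i := by omega
        subst this
        omega
    have hle : L[i + 1] ≤ b := by
      rcases Nat.lt_or_ge (i + 1) jb with h | h
      · have := hsorted.rel_get_of_lt (a := ⟨i + 1, hi⟩) (b := ⟨jb, hjb⟩) (by simpa)
        simp only [List.get_eq_getElem] at this
        omega
      · have : jb = i + 1 := by omega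
        subst this
        omega
    calc (L[i + 1] : ℝ) ≤ (b : ℝ) := by exact_mod_cast hle
      _ ≤ y * L[i] := hble
  · -- gaps → F condition, via easy_dir
    intro hgap
    apply easy_dir y hy n hn
    intro a han halt
    obtain ⟨ia, hia, hiaeq⟩ := List.mem_iff_getElem.mp
      ((hmemL a).mpr (Nat.mem_divisors.mpr ⟨han, hn0⟩))
    obtain ⟨inn, hinn, hinneq⟩ := List.mem_iff_getElem.mp
      ((hmemL n).mpr (Nat.mem_divisors.mpr ⟨dvd_rfl, hn0⟩))
    have hialt : ia < inn := by
      by_contra hcon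
      push_neg at hcon
      rcases Nat.lt_or_ge inn ia with h | h
      · have := hsorted.rel_get_of_lt (a := ⟨inn, hinn⟩) (b := ⟨ia, hia⟩) (by simpa)
        simp only [List.get_eq_getElem] at this
        omega
      · have : inn = ia := by omega
        subst this
        omega
    have hia1 : ia + 1 < L.length := by omega
    have := hgap ia hia1
    refine ⟨L[ia + 1], (Nat.mem_divisors.mp ((hmemL _).mp (List.getElem_mem hia1))).1, ?_, ?_⟩
    · have := hsorted.rel_get_of_lt (a := ⟨ia, hia⟩) (b := ⟨ia + 1, hia1⟩) (by simp)
      simp only [List.get_eq_getElem] at this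
      omega
    · rw [← hiaeq]
      exact this
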